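/- arXiv:math/0607197 — 2 statements merged into one kernel-verified Lean document; each statement's English description precedes it below -/
import Mathlib

section
/- For r, H > 0 and a > 0 large enough that r/2 + H/(2a) ≤ r, the control ũ(x) = a on [0, r/2 + H/(2a)] and ũ(x) = −a on (r/2 + H/(2a), r] is admissible (its integral over [0,r] equals H) and its resistance equals r/(1+a²); hence the infimum of the resistance over unrestricted admissible controls is 0 and is not attained. -/
/-!
The resistance integrand `1 / (1 + u²)` is positive, so every resistance is positive and `0` is
never attained. On the other hand a control that only takes the values `±a` has resistance
`r / (1 + a²)` whatever the switching point, and the switching point `r/2 + H/(2a)` fixes its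
integral to `H`; letting `a → ∞` drives the resistance to `0`.
-/

open MeasureTheory Filter Topology

namespace NewtonProblem

noncomputable def resistance (r : ℝ) (u : ℝ → ℝ) : ℝ :=
  ∫ x in (0:ℝ)..r, 1 / (1 + (u x) ^ 2)

noncomputable def admissibleResistances (r H : ℝ) : Set ℝ :=
  {R : ℝ | ∃ u : ℝ → ℝ, Measurable u ∧ IntervalIntegrable u volume 0 r ∧
    (∫ x in (0:ℝ)..r, u x) = H ∧ R = resistance r u}

theorem resistance_pos {r : ℝ} {u : ℝ → ℝ} (hu : Measurable u) (hr : 0 < r) :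
    0 < resistance r u := by
  have hmeas : Measurable fun x => 1 / (1 + (u x) ^ 2) :=
    measurable_const.div (measurable_const.add (hu.pow_const 2))
  have hbound : ∀ x, ‖1 / (1 + (u x) ^ 2)‖ ≤ 1 := fun x => by
    rw [Real.norm_of_nonneg (by positivity), div_le_one (by positivity)]
    nlinarith [sq_nonneg (u x)]
  have hint : IntervalIntegrable (fun x => 1 / (1 + (u x) ^ 2)) volume 0 r :=
    intervalIntegrable_const.mono_fun' hmeas.aestronglyMeasurable (ae_of_all _ hbound)
  exact intervalIntegral.intervalIntegral_pos_of_pos hint (fun x => by positivity) hr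

theorem resistance_of_sq_eq {r a : ℝ} {u : ℝ → ℝ} (hu : ∀ x, u x ^ 2 = a ^ 2) :
    resistance r u = r / (1 + a ^ 2) := by
  simp only [resistance, hu, intervalIntegral.integral_const, smul_eq_mul, sub_zero]
  ring

noncomputable def zigzag (c a : ℝ) (x : ℝ) : ℝ :=
  if x ≤ c then a else -a

theorem measurable_zigzag (c a : ℝ) : Measurable (zigzag c a) :=
  Measurable.ite measurableSet_Iic measurable_const measurable_const

theorem zigzag_sq (c a x : ℝ) : zigzag c a x ^ 2 = a ^ 2 := by
  unfold zigzag
  split_ifs <;> simp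

theorem norm_zigzag (c a x : ℝ) : ‖zigzag c a x‖ = |a| := by
  unfold zigzag
  split_ifs <;> simp

theorem intervalIntegrable_zigzag (c a p q : ℝ) :
    IntervalIntegrable (zigzag c a) volume p q :=
  intervalIntegrable_const.mono_fun' (measurable_zigzag c a).aestronglyMeasurable
    (ae_of_all _ fun x => (norm_zigzag c a x).le)

theorem integral_zigzag {c r : ℝ} (a : ℝ) (hc : 0 ≤ c) (hcr : c ≤ r) :
    ∫ x in (0:ℝ)..r, zigzag c a x = a * (2 * c - r) := by
  have h_left : ∫ x in (0:ℝ)..c, zigzag c a x = ∫ _ in (0:ℝ)..c, a :=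
    intervalIntegral.integral_congr fun x hx => if_pos (Set.uIcc_of_le hc ▸ hx).2
  have h_right : ∫ x in c..r, zigzag c a x = ∫ _ in c..r, -a := by
    rw [intervalIntegral.integral_of_le hcr, intervalIntegral.integral_of_le hcr]
    exact setIntegral_congr_fun measurableSet_Ioc fun x hx => if_neg (not_le.2 hx.1)
  rw [← intervalIntegral.integral_add_adjacent_intervals (intervalIntegrable_zigzag c a 0 c)
    (intervalIntegrable_zigzag c a c r), h_left, h_right]
  simp only [intervalIntegral.integral_const, smul_eq_mul]
  ring

theorem integral_zigzag_switch {r H a : ℝ} (hH : 0 ≤ H) (ha : 0 < a)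
    (hle : r / 2 + H / (2 * a) ≤ r) :
    ∫ x in (0:ℝ)..r, zigzag (r / 2 + H / (2 * a)) a x = H := by
  have hc : 0 ≤ r / 2 + H / (2 * a) := by
    have : 0 ≤ H / (2 * a) := by positivity
    linarith
  rw [integral_zigzag a hc hle]
  field_simp
  ring

theorem resistance_zigzag_mem {r H a : ℝ} (hH : 0 ≤ H) (ha : 0 < a)
    (hle : r / 2 + H / (2 * a) ≤ r) :
    r / (1 + a ^ 2) ∈ admissibleResistances r H :=
  ⟨zigzag _ a, measurable_zigzag _ a, intervalIntegrable_zigzag _ a 0 r,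
    integral_zigzag_switch hH ha hle, (resistance_of_sq_eq (zigzag_sq _ a)).symm⟩

theorem switch_le_of_div_le {r H a : ℝ} (hr : 0 < r) (ha : 0 < a) (h : H / r ≤ a) :
    r / 2 + H / (2 * a) ≤ r := by
  have hHr : H ≤ a * r := (div_le_iff₀ hr).1 h
  have : H / (2 * a) ≤ r / 2 := by
    rw [div_le_iff₀ (by positivity)]
    linarith
  linarith

theorem isGLB_admissibleResistances {r H : ℝ} (hr : 0 < r) (hH : 0 ≤ H) :
    IsGLB (admissibleResistances r H) 0 := by
  refine isGLB_of_mem_closure (fun R ⟨u, hu, _, _, hR⟩ => hR ▸ (resistance_pos hu hr).le) ?_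
  have h_lim : Tendsto (fun a : ℝ => r / (1 + a ^ 2)) atTop (𝓝 0) :=
    tendsto_const_nhds.div_atTop
      (tendsto_atTop_add_const_left _ 1 (tendsto_pow_atTop two_ne_zero))
  refine mem_closure_of_tendsto h_lim ?_
  filter_upwards [eventually_gt_atTop 0, eventually_ge_atTop (H / r)] with a ha haH
  exact resistance_zigzag_mem hH ha (switch_le_of_div_le hr ha haH)

theorem zero_notMem_admissibleResistances {r H : ℝ} (hr : 0 < r) :
    (0 : ℝ) ∉ admissibleResistances r H :=
  fun ⟨u, hu, _, _, h0⟩ => (resistance_pos hu hr).ne h0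

end NewtonProblem

/-- The zig-zag control `ũ = a` on `[0, r/2 + H/(2a)]`, `ũ = -a` afterwards, is
admissible (`∫₀ʳ ũ = H`) with resistance `r/(1+a²)`; consequently the infimum of
the resistance over admissible controls is `0`, and it is not attained. -/
theorem stmt_10 (r H : ℝ) (hr : 0 < r) (hH : 0 < H) :
    (∀ a : ℝ, 0 < a → r / 2 + H / (2 * a) ≤ r →
      (∫ x in (0:ℝ)..r, (if x ≤ r / 2 + H / (2 * a) then a else -a)) = H ∧
      (∫ x in (0:ℝ)..r,
        1 / (1 + (if x ≤ r / 2 + H / (2 * a) then a else -a) ^ 2)) = r / (1 + a ^ 2)) ∧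
    IsGLB {R : ℝ | ∃ u : ℝ → ℝ, Measurable u ∧
        IntervalIntegrable u MeasureTheory.volume 0 r ∧
        (∫ x in (0:ℝ)..r, u x) = H ∧
        R = ∫ x in (0:ℝ)..r, 1 / (1 + (u x) ^ 2)} 0 ∧
    (0 : ℝ) ∉ {R : ℝ | ∃ u : ℝ → ℝ, Measurable u ∧
        IntervalIntegrable u MeasureTheory.volume 0 r ∧
        (∫ x in (0:ℝ)..r, u x) = H ∧
        R = ∫ x in (0:ℝ)..r, 1 / (1 + (u x) ^ 2)} :=
  ⟨fun a ha hle => ⟨NewtonProblem.integral_zigzag_switch hH.le ha hle,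
      NewtonProblem.resistance_of_sq_eq (NewtonProblem.zigzag_sq _ a)⟩,
    NewtonProblem.isGLB_admissibleResistances hr hH.le,
    NewtonProblem.zero_notMem_admissibleResistances hr⟩
end

section
/- For r, H > 0 with H > r, among all controls of the form u(x) = 0 on [0,ξ₁], u(x) = H/(ξ₂−ξ₁) on [ξ₁,ξ₂], u(x) = 0 on [ξ₂,r] with 0 ≤ ξ₁ ≤ ξ₂ ≤ r, the resistance ξ₁ + (ξ₂−ξ₁)³/((ξ₂−ξ₁)²+H²) + (r−ξ₂) is uniquely minimized at ξ₁ = 0, ξ₂ = r, with minimum value r³/(r²+H²). -/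
/-!
The resistance depends on `(ξ₁, ξ₂)` only through the ramp length `d = ξ₂ - ξ₁`, and
its excess over the full ramp `d = r` factors as
`(r - d) H² (H² - d r) / ((d² + H²)(r² + H²))`, which is positive for `0 ≤ d < r < H`.
-/

/-- Resistance of a profile on `[0, r]` whose linear part, of rise `H`, has horizontal
length `d`; the flat parts contribute their total length `r - d`. -/
noncomputable def rampResistance (H r d : ℝ) : ℝ :=
  (r - d) + d ^ 3 / (d ^ 2 + H ^ 2)

lemma rampResistance_self (H r : ℝ) :
    rampResistance H r r = r ^ 3 / (r ^ 2 + H ^ 2) := by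
  simp [rampResistance]

lemma rampResistance_sub_rampResistance_self {H : ℝ} (hH : H ≠ 0) (r d : ℝ) :
    rampResistance H r d - rampResistance H r r =
      (r - d) * H ^ 2 * (H ^ 2 - d * r) / ((d ^ 2 + H ^ 2) * (r ^ 2 + H ^ 2)) := by
  have hd : d ^ 2 + H ^ 2 ≠ 0 := by positivity
  have hr : r ^ 2 + H ^ 2 ≠ 0 := by positivity
  unfold rampResistance
  field_simp
  ring

lemma rampResistance_self_lt {H r d : ℝ} (hd : 0 ≤ d) (hdr : d < r) (hH : r < H) :
    rampResistance H r r < rampResistance H r d := by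
  have hH0 : 0 < H := hd.trans_lt (hdr.trans hH)
  have hgap : 0 < H ^ 2 - d * r := by nlinarith
  have hdiff := rampResistance_sub_rampResistance_self hH0.ne' r d
  have hpos : 0 < (r - d) * H ^ 2 * (H ^ 2 - d * r) /
      ((d ^ 2 + H ^ 2) * (r ^ 2 + H ^ 2)) := by
    have : 0 < r - d := sub_pos.mpr hdr
    positivity
  linarith

theorem stmt_17_general (r H : ℝ) (hH : r < H) :
    (∀ ξ₁ ξ₂ : ℝ, 0 ≤ ξ₁ → ξ₁ ≤ ξ₂ → ξ₂ ≤ r →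
      ξ₁ + (ξ₂ - ξ₁) ^ 3 / ((ξ₂ - ξ₁) ^ 2 + H ^ 2) + (r - ξ₂) ≥
        r ^ 3 / (r ^ 2 + H ^ 2) ∧
      (ξ₁ + (ξ₂ - ξ₁) ^ 3 / ((ξ₂ - ξ₁) ^ 2 + H ^ 2) + (r - ξ₂) =
        r ^ 3 / (r ^ 2 + H ^ 2) → ξ₁ = 0 ∧ ξ₂ = r)) ∧
    (0:ℝ) + (r - 0) ^ 3 / ((r - 0) ^ 2 + H ^ 2) + (r - r) = r ^ 3 / (r ^ 2 + H ^ 2) := by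
  refine ⟨fun ξ₁ ξ₂ h₁ h₁₂ h₂ => ?_, by simp⟩
  have hres : ξ₁ + (ξ₂ - ξ₁) ^ 3 / ((ξ₂ - ξ₁) ^ 2 + H ^ 2) + (r - ξ₂) =
      rampResistance H r (ξ₂ - ξ₁) := by
    unfold rampResistance; ring
  rw [hres, ← rampResistance_self]
  rcases (show ξ₂ - ξ₁ ≤ r by linarith).eq_or_lt with hfull | hshort
  · rw [hfull]
    exact ⟨le_rfl, fun _ => ⟨by linarith, by linarith⟩⟩
  · have hlt := rampResistance_self_lt (sub_nonneg.mpr h₁₂) hshort hH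
    exact ⟨hlt.le, fun heq => absurd heq hlt.ne'⟩

/-- For `H > r > 0`, among profiles flat on `[0,ξ₁]`, linear with rise `H` on
`[ξ₁,ξ₂]`, flat on `[ξ₂,r]`, the resistance
`ξ₁ + (ξ₂-ξ₁)³/((ξ₂-ξ₁)²+H²) + (r-ξ₂)` is uniquely minimized at `ξ₁ = 0`,
`ξ₂ = r`, with minimum value `r³/(r²+H²)`. -/
theorem stmt_17 (r H : ℝ) (hr : 0 < r) (hH : r < H) :
    (∀ ξ₁ ξ₂ : ℝ, 0 ≤ ξ₁ → ξ₁ ≤ ξ₂ → ξ₂ ≤ r →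
      ξ₁ + (ξ₂ - ξ₁) ^ 3 / ((ξ₂ - ξ₁) ^ 2 + H ^ 2) + (r - ξ₂) ≥
        r ^ 3 / (r ^ 2 + H ^ 2) ∧
      (ξ₁ + (ξ₂ - ξ₁) ^ 3 / ((ξ₂ - ξ₁) ^ 2 + H ^ 2) + (r - ξ₂) =
        r ^ 3 / (r ^ 2 + H ^ 2) → ξ₁ = 0 ∧ ξ₂ = r)) ∧
    (0:ℝ) + (r - 0) ^ 3 / ((r - 0) ^ 2 + H ^ 2) + (r - r) = r ^ 3 / (r ^ 2 + H ^ 2) :=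
  stmt_17_general r H hH
end
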